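/- arXiv:2106.10833 — 3 statements merged into one kernel-verified Lean document; each statement's English description precedes it below -/
import Mathlib

section
/- Let $(M^n,g,X,\lambda)$ be a quasi $k$-Yamabe soliton, i.e. $\frac{1}{2}\mathcal{L}_X g - \frac{1}{m} X^\flat \otimes X^\flat = (\sigma_k - \lambda)g$. If $\mathrm{div}\, X = 0$, then $n(\sigma_k - \lambda) = -\frac{1}{m}|X|^2$ and $g(\nabla_X X, X) = \frac{n-1}{nm}|X|^4$. -/
/-- For a quasi `k`-Yamabe soliton
`½ L_X g - (1/m) X♭⊗X♭ = (σ_k - λ) g` (components in a local orthonormal frame)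
with `div X = 0`, one gets `n(σ_k - λ) = -(1/m)|X|²` and
`g(∇_X X, X) = ((n-1)/(nm)) |X|⁴`.  The facts `tr(½ L_X g) = div X` and
`½ (L_X g)(X,X) = g(∇_X X, X)` are recorded as hypotheses. -/
theorem stmt4 {M : Type*} (n : ℕ) (hn : 3 ≤ n)
    (halfLie : M → Fin n → Fin n → ℝ) (X : M → Fin n → ℝ)
    (divX covXXX σk : M → ℝ) (m lam : ℝ) (hm : m ≠ 0)
    (hsol : ∀ x i j, halfLie x i j - (1 / m) * (X x i * X x j)
      = (σk x - lam) * (if i = j then (1 : ℝ) else 0))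
    (htr : ∀ x, ∑ i, halfLie x i i = divX x)
    (hXX : ∀ x, ∑ i, ∑ j, halfLie x i j * X x i * X x j = covXXX x)
    (hdiv0 : ∀ x, divX x = 0) :
    ∀ x, (n : ℝ) * (σk x - lam) = -(1 / m) * (∑ i, (X x i) ^ 2)
      ∧ covXXX x = (((n : ℝ) - 1) / ((n : ℝ) * m)) * (∑ i, (X x i) ^ 2) ^ 2 := by
  intro x
  have hn0 : (n : ℝ) ≠ 0 := by
    have : 0 < n := by omega
    exact_mod_cast this.ne'
  have hH : ∀ i j, halfLie x i j
      = (1 / m) * (X x i * X x j) + (σk x - lam) * (if i = j then (1 : ℝ) else 0) := by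
    intro i j
    have := hsol x i j
    linarith
  set S := ∑ i, (X x i) ^ 2 with hS
  have h1 : (1 / m) * S + (n : ℝ) * (σk x - lam) = 0 := by
    have := htr x
    rw [hdiv0 x] at this
    rw [← this]
    simp only [hH, if_pos rfl, mul_one]
    rw [Finset.sum_add_distrib, Finset.sum_const, Finset.card_univ, Fintype.card_fin,
      nsmul_eq_mul]
    have l : ∑ i : Fin n, 1 / m * (X x i * X x i) = 1 / m * S := by
      rw [hS, Finset.mul_sum]
      exact Finset.sum_congr rfl fun i _ => by ring
    rw [l]; ring_nf; simp
  have hfirst : (n : ℝ) * (σk x - lam) = -(1 / m) * S := by linarith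
  have h2 : covXXX x = (1 / m) * S ^ 2 + (σk x - lam) * S := by
    rw [← hXX x]
    have key : ∀ i : Fin n, ∑ j, halfLie x i j * X x i * X x j
        = (1 / m) * ((X x i) ^ 2 * S) + (σk x - lam) * (X x i) ^ 2 := by
      intro i
      have e : ∀ j, halfLie x i j * X x i * X x j
          = (1 / m) * ((X x i) ^ 2 * (X x j) ^ 2)
            + (if i = j then (σk x - lam) * (X x i) ^ 2 else 0) := by
        intro j
        rw [hH]
        split_ifs with h
        · subst h; ring
        · ring
      simp only [e]
      rw [Finset.sum_add_distrib, Finset.sum_ite_eq]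
      simp only [Finset.mem_univ, if_pos, ← Finset.mul_sum]
      rfl
    simp only [key]
    rw [Finset.sum_add_distrib]
    have l1 : ∑ i : Fin n, 1 / m * (X x i ^ 2 * S) = 1 / m * S ^ 2 := by
      rw [← Finset.mul_sum, ← Finset.sum_mul, ← hS, sq]
    have l2 : ∑ i : Fin n, (σk x - lam) * X x i ^ 2 = (σk x - lam) * S := by
      rw [← Finset.mul_sum, ← hS]
    rw [l1, l2]
  constructor
  · exact hfirst
  · have hσ : σk x - lam = -(1 / m) * S / n := by
      field_simp at hfirst ⊢
      linarith
    rw [h2, hσ]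
    field_simp
    ring
end

section
/- On the half-space $M = \{x \in \mathbb{R}^n : x_n > 0\}$ with hyperbolic-type metric $g_{ij} = (k_0 x_n)^{-2}\delta_{ij}$ ($k_0 > 0$), the $\sigma_k$-curvature is the constant $\sigma_k = -\binom{n}{k}(-1)^{k-1}\left(\frac{k_0^2}{2}\right)^k$, and the function $f(x) = -m\log(k_1/x_n)$ satisfies $\nabla^2 f - \frac{1}{m}df\otimes df = -mk_0^2\, g$; hence $(M,g,f)$ is a quasi $k$-Yamabe gradient soliton with $\lambda = -\binom{n}{k}(-1)^{k-1}(k_0^2/2)^k + mk_0^2$. -/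
open Real MeasureTheory

noncomputable section

/-- Partial derivative in the `i`-th coordinate direction on `ℝⁿ`. -/
def pd {n : ℕ} (i : Fin n) (F : EuclideanSpace ℝ (Fin n) → ℝ)
    (x : EuclideanSpace ℝ (Fin n)) : ℝ :=
  fderiv ℝ F x (EuclideanSpace.single i 1)

/-- Components of the conformal metric `g = φ⁻² δ`. -/
def gconf {n : ℕ} (φ : EuclideanSpace ℝ (Fin n) → ℝ)
    (x : EuclideanSpace ℝ (Fin n)) (i j : Fin n) : ℝ :=
  ((φ x) ^ 2)⁻¹ * (if i = j then 1 else 0)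

/-- Components of the inverse metric `g⁻¹ = φ² δ`. -/
def ginv {n : ℕ} (φ : EuclideanSpace ℝ (Fin n) → ℝ)
    (x : EuclideanSpace ℝ (Fin n)) (i j : Fin n) : ℝ :=
  (φ x) ^ 2 * (if i = j then 1 else 0)

/-- Christoffel symbols `Γ^k_{ij}` of the metric `g = φ⁻² δ`. -/
def Chr {n : ℕ} (φ : EuclideanSpace ℝ (Fin n) → ℝ) (k i j : Fin n)
    (x : EuclideanSpace ℝ (Fin n)) : ℝ :=
  (1 / 2) * ∑ l, ginv φ x k l *
    (pd i (fun y => gconf φ y j l) x + pd j (fun y => gconf φ y i l) x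
      - pd l (fun y => gconf φ y i j) x)

/-- Riemann curvature `R^l_{ijk}` of `g = φ⁻² δ`. -/
def RiemConf {n : ℕ} (φ : EuclideanSpace ℝ (Fin n) → ℝ) (l i j k : Fin n)
    (x : EuclideanSpace ℝ (Fin n)) : ℝ :=
  pd i (Chr φ l j k) x - pd j (Chr φ l i k) x
    + ∑ p, (Chr φ l i p x * Chr φ p j k x - Chr φ l j p x * Chr φ p i k x)

/-- Ricci tensor components `Ric_{jk}` of `g = φ⁻² δ`. -/
def RicConf {n : ℕ} (φ : EuclideanSpace ℝ (Fin n) → ℝ)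
    (x : EuclideanSpace ℝ (Fin n)) (j k : Fin n) : ℝ :=
  ∑ i, RiemConf φ i i j k x

/-- Scalar curvature of `g = φ⁻² δ`. -/
def ScalConf {n : ℕ} (φ : EuclideanSpace ℝ (Fin n) → ℝ)
    (x : EuclideanSpace ℝ (Fin n)) : ℝ :=
  ∑ j, ∑ k, ginv φ x j k * RicConf φ x j k

/-- Schouten tensor `A_g = (Ric - R/(2(n-1)) g)/(n-2)` of `g = φ⁻² δ`. -/
def SchoutenConf {n : ℕ} (φ : EuclideanSpace ℝ (Fin n) → ℝ)
    (x : EuclideanSpace ℝ (Fin n)) (i j : Fin n) : ℝ :=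
  (1 / ((n : ℝ) - 2)) *
    (RicConf φ x i j - ScalConf φ x / (2 * ((n : ℝ) - 1)) * gconf φ x i j)

/-- The endomorphism `g⁻¹ A_g` of `g = φ⁻² δ`, as a matrix. -/
def SchoutenEnd {n : ℕ} (φ : EuclideanSpace ℝ (Fin n) → ℝ)
    (x : EuclideanSpace ℝ (Fin n)) : Matrix (Fin n) (Fin n) ℝ :=
  Matrix.of fun i j => ∑ l, ginv φ x i l * SchoutenConf φ x l j

/-- The `σ_k`-curvature of `g = φ⁻² δ`: the `k`-th elementary symmetric function of the
eigenvalues of `g⁻¹ A_g`, read off from the characteristic polynomial. -/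
def sigmaConf {n : ℕ} (k : ℕ) (φ : EuclideanSpace ℝ (Fin n) → ℝ)
    (x : EuclideanSpace ℝ (Fin n)) : ℝ :=
  (-1) ^ k * ((SchoutenEnd φ x).charpoly.coeff (n - k))

/-- Hessian of `f` with respect to the metric `g = φ⁻² δ`. -/
def HessConf {n : ℕ} (φ f : EuclideanSpace ℝ (Fin n) → ℝ)
    (x : EuclideanSpace ℝ (Fin n)) (i j : Fin n) : ℝ :=
  pd i (fun y => pd j f y) x - ∑ l, Chr φ l i j x * pd l f x

section AuxLemmas

open Finset

variable {n : ℕ}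

lemma pd_comp (idx i : Fin n) (F : ℝ → ℝ) (F' : ℝ)
    (x : EuclideanSpace ℝ (Fin n)) (hF : HasDerivAt F F' (x idx)) :
    pd i (fun y => F (y idx)) x = F' * (if i = idx then 1 else 0) := by
  have heq : (fun y : EuclideanSpace ℝ (Fin n) => y idx)
      = ⇑(EuclideanSpace.proj (𝕜 := ℝ) idx) := by ext y; rfl
  have hproj : HasFDerivAt (fun y : EuclideanSpace ℝ (Fin n) => y idx)
      ((EuclideanSpace.proj (𝕜 := ℝ) idx : EuclideanSpace ℝ (Fin n) →L[ℝ] ℝ)) x := by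
    rw [heq]; exact (EuclideanSpace.proj (𝕜 := ℝ) idx).hasFDerivAt
  have h : HasFDerivAt (fun y : EuclideanSpace ℝ (Fin n) => F (y idx))
      (F' • (EuclideanSpace.proj (𝕜 := ℝ) idx : EuclideanSpace ℝ (Fin n) →L[ℝ] ℝ)) x :=
    hF.comp_hasFDerivAt x hproj
  rw [pd, h.fderiv]
  by_cases hi : i = idx
  · simp [EuclideanSpace.single_apply, hi]
  · simp [EuclideanSpace.single_apply, hi, Ne.symm hi]

lemma pd_congr (i : Fin n) {F G : EuclideanSpace ℝ (Fin n) → ℝ}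
    {x : EuclideanSpace ℝ (Fin n)} (h : ∀ᶠ y in nhds x, F y = G y) :
    pd i F x = pd i G x := by
  rw [pd, pd, Filter.EventuallyEq.fderiv_eq h]

lemma open_half (idx : Fin n) :
    IsOpen {y : EuclideanSpace ℝ (Fin n) | 0 < y idx} := by
  have : Continuous (fun y : EuclideanSpace ℝ (Fin n) => y idx) :=
    (EuclideanSpace.proj (𝕜 := ℝ) idx).continuous
  exact isOpen_lt continuous_const this

lemma ev_half {idx : Fin n} {x : EuclideanSpace ℝ (Fin n)} (hx : 0 < x idx) :
    ∀ᶠ y in nhds x, 0 < y idx :=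
  (open_half idx).eventually_mem hx

variable (k0 : ℝ) (idx : Fin n)

lemma pd_gconf (hk0 : k0 ≠ 0) (i a b : Fin n) (x : EuclideanSpace ℝ (Fin n))
    (hx : x idx ≠ 0) :
    pd i (fun y => gconf (fun z : EuclideanSpace ℝ (Fin n) => k0 * z idx) y a b) x
      = (-2 * (k0 ^ 2 * (x idx) ^ 3)⁻¹) * (if a = b then 1 else 0)
          * (if i = idx then 1 else 0) := by
  set c : ℝ := if a = b then 1 else 0 with hc
  have h1 : HasDerivAt (fun t : ℝ => k0 * t) (k0 * 1) (x idx) :=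
    (hasDerivAt_id (x idx)).const_mul k0
  have h2 := h1.pow 2
  have hne : (k0 * x idx) ^ 2 ≠ 0 := pow_ne_zero _ (mul_ne_zero hk0 hx)
  have h3 := h2.inv hne
  have h4 := h3.mul_const c
  have h := pd_comp idx i (fun t : ℝ => ((k0 * t) ^ 2)⁻¹ * c) _ x h4
  have hgoal : pd i (fun y => gconf (fun z : EuclideanSpace ℝ (Fin n) => k0 * z idx) y a b) x
      = -(↑2 * (k0 * x idx) ^ (2 - 1) * (k0 * 1)) / ((k0 * x idx) ^ 2) ^ 2 * c
          * (if i = idx then 1 else 0) := h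
  rw [hgoal]
  have : -(↑2 * (k0 * x idx) ^ (2 - 1) * (k0 * 1)) / ((k0 * x idx) ^ 2) ^ 2
      = -2 * (k0 ^ 2 * (x idx) ^ 3)⁻¹ := by
    field_simp
    ring
  rw [this]

lemma chr_eq (hk0 : k0 ≠ 0) (l i j : Fin n) (x : EuclideanSpace ℝ (Fin n))
    (hx : x idx ≠ 0) :
    Chr (fun z : EuclideanSpace ℝ (Fin n) => k0 * z idx) l i j x
      = (x idx)⁻¹ * ((if l = idx then (1:ℝ) else 0) * (if i = j then 1 else 0)
          - (if i = idx then 1 else 0) * (if j = l then 1 else 0)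
          - (if j = idx then 1 else 0) * (if i = l then 1 else 0)) := by
  rw [Chr]
  have hsum : ∀ l' : Fin n,
      ginv (fun z : EuclideanSpace ℝ (Fin n) => k0 * z idx) x l l' *
        (pd i (fun y => gconf (fun z : EuclideanSpace ℝ (Fin n) => k0 * z idx) y j l') x
          + pd j (fun y => gconf (fun z : EuclideanSpace ℝ (Fin n) => k0 * z idx) y i l') x
          - pd l' (fun y => gconf (fun z : EuclideanSpace ℝ (Fin n) => k0 * z idx) y i j) x)
      = (k0 * x idx) ^ 2 * (if l = l' then 1 else 0) *
          ((-2 * (k0 ^ 2 * (x idx) ^ 3)⁻¹) * (if j = l' then 1 else 0) * (if i = idx then 1 else 0)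
            + (-2 * (k0 ^ 2 * (x idx) ^ 3)⁻¹) * (if i = l' then 1 else 0) * (if j = idx then 1 else 0)
            - (-2 * (k0 ^ 2 * (x idx) ^ 3)⁻¹) * (if i = j then 1 else 0) * (if l' = idx then 1 else 0)) := by
    intro l'
    rw [pd_gconf k0 idx hk0, pd_gconf k0 idx hk0, pd_gconf k0 idx hk0] <;> try exact hx
    rfl
  rw [Finset.sum_congr rfl fun l' _ => hsum l']
  rw [Fintype.sum_eq_single l (fun l' hl' => by simp [Ne.symm hl'])]
  simp only [if_pos rfl, mul_one]
  field_simp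
  split_ifs <;> first
    | ring
    | (exfalso; simp_all)

lemma pd_chr (hk0 : k0 ≠ 0) (b l i j : Fin n) (x : EuclideanSpace ℝ (Fin n))
    (hx : 0 < x idx) :
    pd b (Chr (fun z : EuclideanSpace ℝ (Fin n) => k0 * z idx) l i j) x
      = (-((x idx) ^ 2)⁻¹ * ((if l = idx then (1:ℝ) else 0) * (if i = j then 1 else 0)
          - (if i = idx then 1 else 0) * (if j = l then 1 else 0)
          - (if j = idx then 1 else 0) * (if i = l then 1 else 0)))
          * (if b = idx then 1 else 0) := by
  set c : ℝ := (if l = idx then (1:ℝ) else 0) * (if i = j then 1 else 0)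
      - (if i = idx then 1 else 0) * (if j = l then 1 else 0)
      - (if j = idx then 1 else 0) * (if i = l then 1 else 0) with hc
  have hev : ∀ᶠ y in nhds x, Chr (fun z : EuclideanSpace ℝ (Fin n) => k0 * z idx) l i j y
      = (y idx)⁻¹ * c := by
    filter_upwards [ev_half hx] with y hy
    exact chr_eq k0 idx hk0 l i j y hy.ne'
  rw [pd_congr b hev]
  have h := pd_comp idx b (fun t : ℝ => t⁻¹ * c) _ x ((hasDerivAt_inv hx.ne').mul_const c)
  exact h.trans (by ring)

lemma riem_eq (hk0 : k0 ≠ 0) (a j k : Fin n) (x : EuclideanSpace ℝ (Fin n))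
    (hx : 0 < x idx) :
    RiemConf (fun z : EuclideanSpace ℝ (Fin n) => k0 * z idx) a a j k x
      = ((x idx) ^ 2)⁻¹ *
          ((if a = j then (1:ℝ) else 0) * (if a = k then 1 else 0)
            - (if j = k then 1 else 0)) := by
  rw [RiemConf, pd_chr k0 idx hk0 a a j k x hx, pd_chr k0 idx hk0 j a a k x hx]
  rw [Finset.sum_congr rfl fun p _ => by
    rw [chr_eq k0 idx hk0 a a p x hx.ne', chr_eq k0 idx hk0 p j k x hx.ne',
        chr_eq k0 idx hk0 a j p x hx.ne', chr_eq k0 idx hk0 p a k x hx.ne']]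
  simp only [mul_sub, sub_mul, mul_ite, ite_mul, mul_one, one_mul, mul_zero, zero_mul,
    Finset.sum_sub_distrib, Finset.sum_ite_eq, Finset.sum_ite_eq', Finset.mem_univ, if_true,
    if_pos rfl]
  by_cases h1 : a = j <;> by_cases h2 : a = k <;> by_cases h3 : a = idx <;>
    by_cases h4 : j = k <;> by_cases h5 : j = idx <;> by_cases h6 : k = idx
  all_goals try simp_all
  all_goals try simp_all [eq_comm]
  all_goals first
    | rfl
    | (field_simp; ring)
    | ring

lemma ric_eq (hk0 : k0 ≠ 0) (j k : Fin n) (x : EuclideanSpace ℝ (Fin n))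
    (hx : 0 < x idx) :
    RicConf (fun z : EuclideanSpace ℝ (Fin n) => k0 * z idx) x j k
      = -((n:ℝ) - 1) * ((x idx) ^ 2)⁻¹ * (if j = k then 1 else 0) := by
  rw [RicConf, Finset.sum_congr rfl fun a _ => riem_eq k0 idx hk0 a j k x hx]
  simp only [mul_sub, mul_ite, ite_mul, mul_one, one_mul, mul_zero, zero_mul,
    Finset.sum_sub_distrib, Finset.sum_ite_eq, Finset.sum_ite_eq', Finset.mem_univ, if_true,
    Finset.sum_const, Finset.card_univ, Fintype.card_fin, nsmul_eq_mul]
  by_cases h : j = k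
  · simp [h]; ring
  · simp [h, Ne.symm h]

lemma scal_eq (hk0 : k0 ≠ 0) (x : EuclideanSpace ℝ (Fin n)) (hx : 0 < x idx) :
    ScalConf (fun z : EuclideanSpace ℝ (Fin n) => k0 * z idx) x
      = -(n:ℝ) * ((n:ℝ) - 1) * k0 ^ 2 := by
  have hxne : x idx ≠ 0 := hx.ne'
  rw [ScalConf]
  rw [Finset.sum_congr rfl fun j _ => Finset.sum_congr rfl fun k _ => by
    rw [ric_eq k0 idx hk0 j k x hx]]
  simp only [ginv, mul_ite, ite_mul, mul_one, one_mul, mul_zero, zero_mul,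
    Finset.sum_ite_eq, Finset.sum_ite_eq', Finset.mem_univ, if_true,
    Finset.sum_const, Finset.card_univ, Fintype.card_fin, nsmul_eq_mul]
  field_simp

lemma schouten_eq (hn : 3 ≤ n) (hk0 : k0 ≠ 0) (i j : Fin n)
    (x : EuclideanSpace ℝ (Fin n)) (hx : 0 < x idx) :
    SchoutenConf (fun z : EuclideanSpace ℝ (Fin n) => k0 * z idx) x i j
      = -(2⁻¹) * ((x idx) ^ 2)⁻¹ * (if i = j then 1 else 0) := by
  have hxne : x idx ≠ 0 := hx.ne'
  have hn3 : (3:ℝ) ≤ (n:ℝ) := by exact_mod_cast hn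
  have hn1 : ((n:ℝ) - 1) ≠ 0 := by linarith
  have hn2 : ((n:ℝ) - 2) ≠ 0 := by linarith
  rw [SchoutenConf, ric_eq k0 idx hk0 i j x hx, scal_eq k0 idx hk0 x hx]
  simp only [gconf]
  by_cases h : i = j
  all_goals simp [h]
  all_goals field_simp
  all_goals ring

lemma schoutenEnd_eq (hn : 3 ≤ n) (hk0 : k0 ≠ 0)
    (x : EuclideanSpace ℝ (Fin n)) (hx : 0 < x idx) :
    SchoutenEnd (fun z : EuclideanSpace ℝ (Fin n) => k0 * z idx) x
      = (-(k0 ^ 2 / 2)) • (1 : Matrix (Fin n) (Fin n) ℝ) := by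
  have hxne : x idx ≠ 0 := hx.ne'
  ext i j
  show (∑ l, ginv (fun z : EuclideanSpace ℝ (Fin n) => k0 * z idx) x i l *
      SchoutenConf (fun z : EuclideanSpace ℝ (Fin n) => k0 * z idx) x l j) = _
  rw [Finset.sum_congr rfl fun l _ => by
    rw [schouten_eq k0 idx hn hk0 l j x hx]]
  simp only [ginv, Matrix.smul_apply, Matrix.one_apply, smul_eq_mul, mul_ite, ite_mul,
    mul_one, mul_zero, zero_mul, one_mul, Finset.sum_ite_eq, Finset.sum_ite_eq',
    Finset.mem_univ, if_true]
  by_cases h : i = j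
  all_goals simp [h]
  all_goals field_simp
  all_goals ring

lemma charpoly_smul_one (c : ℝ) :
    ((c • (1 : Matrix (Fin n) (Fin n) ℝ)).charpoly)
      = (Polynomial.X - Polynomial.C c) ^ n := by
  have h1 : c • (1 : Matrix (Fin n) (Fin n) ℝ) = Matrix.diagonal (fun _ => c) := by
    ext i j
    by_cases h : i = j
    · subst h; simp [Matrix.one_apply]
    · simp [Matrix.one_apply, h]
  have h2 : Matrix.charmatrix (Matrix.diagonal (fun _ : Fin n => c))
      = Matrix.diagonal (fun _ => Polynomial.X - Polynomial.C c) := by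
    refine Matrix.ext fun i j => ?_
    by_cases h : i = j
    · subst h; rw [Matrix.charmatrix_apply_eq, Matrix.diagonal_apply_eq, Matrix.diagonal_apply_eq]
    · rw [Matrix.charmatrix_apply_ne _ _ _ h, Matrix.diagonal_apply_ne _ h,
        Matrix.diagonal_apply_ne _ h, map_zero, neg_zero]
  rw [h1, Matrix.charpoly, h2, Matrix.det_diagonal]
  simp

lemma pdf_eq (m k1 : ℝ) (hk1 : 0 < k1) (j : Fin n)
    (y : EuclideanSpace ℝ (Fin n)) (hy : 0 < y idx) :
    pd j (fun z : EuclideanSpace ℝ (Fin n) => -m * Real.log (k1 / z idx)) y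
      = m * (y idx)⁻¹ * (if j = idx then 1 else 0) := by
  have hyne : y idx ≠ 0 := hy.ne'
  have h1 : HasDerivAt (fun t : ℝ => k1 * t⁻¹) (k1 * -((y idx) ^ 2)⁻¹) (y idx) :=
    (hasDerivAt_inv hy.ne').const_mul k1
  have h0 : k1 * (y idx)⁻¹ ≠ 0 := by positivity
  have h2 := (h1.log h0).const_mul (-m)
  have hfun : (fun z : EuclideanSpace ℝ (Fin n) => -m * Real.log (k1 / z idx))
      = fun z : EuclideanSpace ℝ (Fin n) => -m * Real.log (k1 * (z idx)⁻¹) := by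
    funext z; rw [div_eq_mul_inv]
  rw [hfun]
  have h := pd_comp idx j (fun t : ℝ => -m * Real.log (k1 * t⁻¹)) _ y h2
  refine h.trans ?_
  have : -m * (k1 * -((y idx) ^ 2)⁻¹ / (k1 * (y idx)⁻¹)) = m * (y idx)⁻¹ := by
    field_simp
  rw [this]

lemma pdpdf_eq (m k1 : ℝ) (hk1 : 0 < k1) (i j : Fin n)
    (x : EuclideanSpace ℝ (Fin n)) (hx : 0 < x idx) :
    pd i (fun y => pd j (fun z : EuclideanSpace ℝ (Fin n) => -m * Real.log (k1 / z idx)) y) x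
      = m * (if j = idx then (1:ℝ) else 0) * -((x idx) ^ 2)⁻¹ * (if i = idx then 1 else 0) := by
  have hev : ∀ᶠ y in nhds x,
      pd j (fun z : EuclideanSpace ℝ (Fin n) => -m * Real.log (k1 / z idx)) y
        = (m * (if j = idx then (1:ℝ) else 0)) * (y idx)⁻¹ := by
    filter_upwards [ev_half hx] with y hy
    rw [pdf_eq idx m k1 hk1 j y hy]; ring
  rw [pd_congr i hev]
  have h := pd_comp idx i (fun t : ℝ => (m * (if j = idx then (1:ℝ) else 0)) * t⁻¹) _ x
    ((hasDerivAt_inv hx.ne').const_mul _)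
  exact h.trans (by ring)

end AuxLemmas

/-- On the half-space `{xₙ > 0}` with the metric
`g = (k₀ xₙ)⁻² δ`, the `σ_k`-curvature is the constant
`-C(n,k)(-1)^{k-1}(k₀²/2)^k`, and `f(x) = -m log(k₁/xₙ)` satisfies
`∇²f - (1/m) df⊗df = -m k₀² g`; hence `(M,g,f)` is a quasi `k`-Yamabe gradient
soliton with `λ = -C(n,k)(-1)^{k-1}(k₀²/2)^k + m k₀²`. -/
theorem stmt11 {n : ℕ} (hn : 3 ≤ n) (k : ℕ) (hk1 : 1 ≤ k) (hkn : k ≤ n)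
    (k0 k1 m : ℝ) (hk0 : 0 < k0) (hk1' : 0 < k1) (hm : m ≠ 0)
    (idx : Fin n) (hidx : (idx : ℕ) = n - 1)
    (φ f : EuclideanSpace ℝ (Fin n) → ℝ)
    (hφ : φ = fun x => k0 * x idx)
    (hf : f = fun x => -m * Real.log (k1 / x idx)) :
    ∀ x : EuclideanSpace ℝ (Fin n), 0 < x idx →
      (sigmaConf k φ x = -(n.choose k : ℝ) * (-1) ^ (k - 1) * (k0 ^ 2 / 2) ^ k)
      ∧ (∀ i j, HessConf φ f x i j - (1 / m) * (pd i f x * pd j f x)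
          = -(m * k0 ^ 2) * gconf φ x i j)
      ∧ (∀ i j, HessConf φ f x i j - (1 / m) * (pd i f x * pd j f x)
          = (sigmaConf k φ x
              - (-(n.choose k : ℝ) * (-1) ^ (k - 1) * (k0 ^ 2 / 2) ^ k + m * k0 ^ 2))
            * gconf φ x i j) := by
  subst hφ
  subst hf
  intro x hx
  have hxne : x idx ≠ 0 := hx.ne'
  have hk0ne : k0 ≠ 0 := hk0.ne'
  have hsig : sigmaConf k (fun x : EuclideanSpace ℝ (Fin n) => k0 * x idx) x
      = -(n.choose k : ℝ) * (-1) ^ (k - 1) * (k0 ^ 2 / 2) ^ k := by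
    rw [sigmaConf, schoutenEnd_eq k0 idx hn hk0ne x hx, charpoly_smul_one]
    rw [sub_eq_add_neg, ← Polynomial.C_neg, Polynomial.coeff_X_add_C_pow]
    rw [Nat.sub_sub_self hkn, Nat.choose_symm hkn]
    obtain ⟨k', rfl⟩ : ∃ k', k = k' + 1 := ⟨k - 1, (Nat.succ_pred_eq_of_pos hk1).symm⟩
    simp only [Nat.add_sub_cancel]
    ring
  have hhess : ∀ i j : Fin n,
      HessConf (fun x : EuclideanSpace ℝ (Fin n) => k0 * x idx)
          (fun x : EuclideanSpace ℝ (Fin n) => -m * Real.log (k1 / x idx)) x i j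
        - (1 / m) * (pd i (fun x : EuclideanSpace ℝ (Fin n) => -m * Real.log (k1 / x idx)) x *
            pd j (fun x : EuclideanSpace ℝ (Fin n) => -m * Real.log (k1 / x idx)) x)
      = -(m * k0 ^ 2) * gconf (fun x : EuclideanSpace ℝ (Fin n) => k0 * x idx) x i j := by
    intro i j
    rw [HessConf, pdpdf_eq idx m k1 hk1' i j x hx,
      pdf_eq idx m k1 hk1' i x hx, pdf_eq idx m k1 hk1' j x hx]
    rw [Finset.sum_congr rfl fun l _ => by
      rw [chr_eq k0 idx hk0ne l i j x hxne, pdf_eq idx m k1 hk1' l x hx]]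
    simp only [gconf, mul_sub, sub_mul, mul_ite, ite_mul, mul_one, one_mul, mul_zero,
      zero_mul, Finset.sum_sub_distrib, Finset.sum_ite_eq, Finset.sum_ite_eq',
      Finset.mem_univ, if_true, if_pos rfl]
    by_cases h1 : i = j <;> by_cases h2 : i = idx <;> by_cases h3 : j = idx
    all_goals try simp_all
    all_goals try simp_all [eq_comm]
    all_goals first
      | rfl
      | (field_simp; ring)
      | ring
    all_goals rw [mul_assoc _ (k0 ^ 2), ← mul_pow, mul_inv_cancel₀ hk0ne, one_pow, mul_one]
  refine ⟨hsig, hhess, fun i j => ?_⟩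
  rw [hsig, show -(n.choose k : ℝ) * (-1) ^ (k - 1) * (k0 ^ 2 / 2) ^ k
      - (-(n.choose k : ℝ) * (-1) ^ (k - 1) * (k0 ^ 2 / 2) ^ k + m * k0 ^ 2)
      = -(m * k0 ^ 2) from by ring]
  exact hhess i j
end
end

section
/- On $M = \{x \in \mathbb{R}^n : x_1 + \cdots + x_n > 0\}$ with the flat Euclidean metric, the nonconstant function $f(x) = -m\log(x_1+\cdots+x_n)$ satisfies $\nabla^2 f = \frac{1}{m}\,df\otimes df$; hence $(M, \delta, f)$ is a quasi $k$-Yamabe gradient soliton with $\sigma_k = \lambda = 0$ and nonconstant potential. -/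
open Real MeasureTheory

noncomputable section

section Aux

lemma pd_const {n : ℕ} (i : Fin n) (c : ℝ) (x : EuclideanSpace ℝ (Fin n)) :
    pd i (fun _ => c) x = 0 := by
  simp [pd]

lemma Ssum_hasFDerivAt {n : ℕ} (x : EuclideanSpace ℝ (Fin n)) :
    HasFDerivAt (fun y : EuclideanSpace ℝ (Fin n) => ∑ i, y i)
      (∑ i, EuclideanSpace.proj (𝕜 := ℝ) i) x := by
  have h : ∀ i : Fin n, HasFDerivAt (fun y : EuclideanSpace ℝ (Fin n) => y i)
      (EuclideanSpace.proj (𝕜 := ℝ) i) x :=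
    fun i => (EuclideanSpace.proj (𝕜 := ℝ) i).hasFDerivAt
  have := HasFDerivAt.fun_sum (u := (Finset.univ : Finset (Fin n))) (fun i _ => h i)
  simpa using this

lemma Ssum_single {n : ℕ} (j : Fin n) :
    (∑ i, EuclideanSpace.proj (𝕜 := ℝ) i) (EuclideanSpace.single j (1:ℝ)) = 1 := by
  simp [ContinuousLinearMap.sum_apply, EuclideanSpace.single_apply]

lemma f_hasFDerivAt {n : ℕ} (m : ℝ) (x : EuclideanSpace ℝ (Fin n)) (hx : (0:ℝ) < ∑ i, x i) :
    HasFDerivAt (fun y : EuclideanSpace ℝ (Fin n) => -m * Real.log (∑ i, y i))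
      ((-m * (∑ i, x i)⁻¹) • (∑ i, EuclideanSpace.proj (𝕜 := ℝ) i)) x := by
  have h1 := (Real.hasDerivAt_log hx.ne').comp_hasFDerivAt x (Ssum_hasFDerivAt x)
  have h2 := h1.const_mul (-m)
  simpa [smul_smul] using h2

lemma pd_f {n : ℕ} (m : ℝ) (j : Fin n) (x : EuclideanSpace ℝ (Fin n))
    (hx : (0:ℝ) < ∑ i, x i) :
    pd j (fun y : EuclideanSpace ℝ (Fin n) => -m * Real.log (∑ i, y i)) x
      = -m * (∑ i, x i)⁻¹ := by
  rw [pd, (f_hasFDerivAt m x hx).fderiv]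
  simp [Ssum_single]

lemma pd_pd_f {n : ℕ} (m : ℝ) (i j : Fin n) (x : EuclideanSpace ℝ (Fin n))
    (hx : (0:ℝ) < ∑ i, x i) :
    pd i (fun y => pd j (fun y : EuclideanSpace ℝ (Fin n) => -m * Real.log (∑ i, y i)) y) x
      = m * ((∑ i, x i)^2)⁻¹ := by
  have hU : IsOpen {y : EuclideanSpace ℝ (Fin n) | (0:ℝ) < ∑ i, y i} := by
    have hc : Continuous fun y : EuclideanSpace ℝ (Fin n) => ∑ i, y i :=
      continuous_finset_sum _ fun i _ => (EuclideanSpace.proj (𝕜 := ℝ) i).continuous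
    exact isOpen_lt continuous_const hc
  have heq : (fun y => pd j (fun y : EuclideanSpace ℝ (Fin n) => -m * Real.log (∑ i, y i)) y)
      =ᶠ[nhds x] fun y => -m * (∑ i, y i)⁻¹ := by
    filter_upwards [hU.mem_nhds hx] with y hy
    exact pd_f m j y hy
  have hder : HasFDerivAt (fun y : EuclideanSpace ℝ (Fin n) => -m * (∑ i, y i)⁻¹)
      ((-m * -((∑ i, x i)^2)⁻¹) • (∑ i, EuclideanSpace.proj (𝕜 := ℝ) i)) x := by
    have h1 := (hasDerivAt_inv hx.ne').comp_hasFDerivAt x (Ssum_hasFDerivAt x)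
    have h2 := h1.const_mul (-m)
    simpa [smul_smul] using h2
  rw [pd, heq.fderiv_eq, hder.fderiv]
  simp [Ssum_single]

lemma gconf_one {n : ℕ} (x : EuclideanSpace ℝ (Fin n)) (i j : Fin n) :
    gconf (fun _ => (1:ℝ)) x i j = if i = j then 1 else 0 := by
  simp [gconf]

lemma Chr_one {n : ℕ} (k i j : Fin n) (x : EuclideanSpace ℝ (Fin n)) :
    Chr (fun _ => (1:ℝ)) k i j x = 0 := by
  simp [Chr, gconf_one, pd_const]

lemma Chr_one_fun {n : ℕ} (k i j : Fin n) :
    Chr (fun _ : EuclideanSpace ℝ (Fin n) => (1:ℝ)) k i j = fun _ => 0 :=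
  funext (Chr_one k i j)

lemma Riem_one {n : ℕ} (l i j k : Fin n) (x : EuclideanSpace ℝ (Fin n)) :
    RiemConf (fun _ => (1:ℝ)) l i j k x = 0 := by
  unfold RiemConf
  rw [Chr_one_fun, Chr_one_fun]
  simp [pd_const, Chr_one]

lemma SchoutenEnd_one {n : ℕ} (x : EuclideanSpace ℝ (Fin n)) :
    SchoutenEnd (fun _ => (1:ℝ)) x = 0 := by
  ext i j
  simp [SchoutenEnd, SchoutenConf, ScalConf, RicConf, Riem_one]

lemma sigma_one_zero {n : ℕ} (k : ℕ) (hk1 : 1 ≤ k) (hkn : k ≤ n)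
    (x : EuclideanSpace ℝ (Fin n)) :
    sigmaConf k (fun _ => (1:ℝ)) x = 0 := by
  rw [sigmaConf, SchoutenEnd_one,
    Matrix.charpoly_of_upperTriangular _ Matrix.blockTriangular_zero]
  simp only [Matrix.zero_apply, map_zero, sub_zero, Finset.prod_const, Finset.card_univ,
    Fintype.card_fin]
  rw [Polynomial.coeff_X_pow]
  simp [show ¬ n - k = n by omega]

end Aux

/-- On `{x ∈ ℝⁿ : x₁ + ⋯ + xₙ > 0}` with the flat Euclidean metric
(conformal factor `φ ≡ 1`, which has vanishing `σ_k`-curvature), the nonconstant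
function `f(x) = -m log(x₁ + ⋯ + xₙ)` satisfies `∇²f = (1/m) df⊗df`; hence
`(M, δ, f)` is a quasi `k`-Yamabe gradient soliton with `σ_k = λ = 0` and
nonconstant potential. -/


theorem stmt12 {n : ℕ} (hn : 3 ≤ n) (k : ℕ) (hk1 : 1 ≤ k) (hkn : k ≤ n)
    (m : ℝ) (hm : m ≠ 0)
    (f : EuclideanSpace ℝ (Fin n) → ℝ)
    (hf : f = fun x => -m * Real.log (∑ i, x i)) :
    (∀ x : EuclideanSpace ℝ (Fin n), 0 < ∑ i, x i →
      (∀ i j, pd i (fun y => pd j f y) x = (1 / m) * (pd i f x * pd j f x))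
      ∧ sigmaConf k (fun _ => (1 : ℝ)) x = 0
      ∧ (∀ i j, HessConf (fun _ => (1 : ℝ)) f x i j
            - (1 / m) * (pd i f x * pd j f x)
          = (sigmaConf k (fun _ => (1 : ℝ)) x - 0)
            * gconf (fun _ => (1 : ℝ)) x i j))
    ∧ ∃ x y : EuclideanSpace ℝ (Fin n),
        0 < ∑ i, x i ∧ 0 < ∑ i, y i ∧ f x ≠ f y := by
  subst hf
  set S : EuclideanSpace ℝ (Fin n) → ℝ := fun y => ∑ i, y i with hS
  constructor
  · intro x hx
    have hSx : (0:ℝ) < ∑ i, x i := hx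
    have hSne : (∑ i, x i) ≠ 0 := hSx.ne'
    have hmain : ∀ i j : Fin n,
        pd i (fun y => pd j (fun x : EuclideanSpace ℝ (Fin n) =>
          -m * Real.log (∑ i, x i)) y) x
          = (1 / m) * (pd i (fun x : EuclideanSpace ℝ (Fin n) =>
              -m * Real.log (∑ i, x i)) x
            * pd j (fun x : EuclideanSpace ℝ (Fin n) =>
              -m * Real.log (∑ i, x i)) x) := by
      intro i j
      rw [pd_pd_f m i j x hx, pd_f m i x hx, pd_f m j x hx, sq, mul_inv]
      field_simp
    refine ⟨hmain, sigma_one_zero k hk1 hkn x, fun i j => ?_⟩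
    rw [sigma_one_zero k hk1 hkn x]
    unfold HessConf
    simp only [Chr_one, zero_mul, Finset.sum_const_zero, sub_zero, zero_sub, neg_zero,
      zero_mul]
    rw [hmain i j]
    ring
  · refine ⟨(WithLp.equiv 2 _).symm (fun _ => (1:ℝ)),
      (WithLp.equiv 2 _).symm (fun _ => (2:ℝ)), ?_, ?_, ?_⟩
    · simp [WithLp.equiv_symm_apply, PiLp.toLp_apply]
      positivity
    · simp [WithLp.equiv_symm_apply, PiLp.toLp_apply]
      positivity
    · simp only [WithLp.equiv_symm_apply, PiLp.toLp_apply, Finset.sum_const, Finset.card_univ,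
        Fintype.card_fin, nsmul_eq_mul, mul_one]
      have hn0 : (0:ℝ) < n := by positivity
      have hlt : Real.log (n:ℝ) < Real.log ((n:ℝ) * 2) := by
        apply Real.log_lt_log hn0
        nlinarith
      intro h
      have := mul_left_cancel₀ (neg_ne_zero.2 hm) h
      rw [this] at hlt
      exact lt_irrefl _ hlt
end
end
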